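/- With the completion construction W′ = { ω ∪ { f(l) | l ∉ ω } : ω ∈ W } for a non-empty collection W of sets of literals, W′ ⊨ K f(l) if and only if for every ω ∈ W, l ∉ ω (i.e., W satisfies 'K not l'). -/

import Mathlib

/-- `V ⊨ K x`. -/
def satK {L : Type*} (V : Set (Set L)) (x : L) : Prop := ∀ σ ∈ V, x ∈ σ

/-- `V ⊨ ¬K x`. -/
def satNegK {L : Type*} (V : Set (Set L)) (x : L) : Prop := ∃ σ ∈ V, x ∉ σ

/-- Completion of a set of original literals: add the fresh literal `Sum.inr l`
(i.e. `l′`, defined by the rule `l′ :- not l`) exactly when `l ∉ ω`.  Original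
literals live in the left summand, fresh ones in the right. -/
def complete {L : Type*} (ω : Set L) : Set (L ⊕ L) :=
  (Sum.inl '' ω) ∪ (Sum.inr '' ωᶜ)

/-- Completion of a whole collection. -/
def completeColl {L : Type*} (W : Set (Set L)) : Set (Set (L ⊕ L)) :=
  { σ | ∃ ω ∈ W, σ = complete ω }

theorem inr_mem_complete_iff {L : Type*} {ω : Set L} {l : L} :
    Sum.inr l ∈ complete ω ↔ l ∉ ω := by
  simp [complete]

theorem satK_completeColl_iff {L : Type*} {W : Set (Set L)} {x : L ⊕ L} :
    satK (completeColl W) x ↔ ∀ ω ∈ W, x ∈ complete ω :=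
  ⟨fun h ω hω => h _ ⟨ω, hω, rfl⟩, fun h _ ⟨ω, hω, hσ⟩ => hσ ▸ h ω hω⟩

theorem K_fresh_iff_K_not_general {L : Type*} (W : Set (Set L)) (l : L) :
    satK (completeColl W) (Sum.inr l) ↔ ∀ ω ∈ W, l ∉ ω := by
  simp only [satK_completeColl_iff, inr_mem_complete_iff]

theorem K_fresh_iff_K_not {L : Type*} (W : Set (Set L)) (hW : W.Nonempty) (l : L) :
    satK (completeColl W) (Sum.inr l) ↔ ∀ ω ∈ W, l ∉ ω :=
  K_fresh_iff_K_not_general W l
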